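/- arXiv:1806.07549 — 3 statements merged into one kernel-verified Lean document; each statement's English description precedes it below -/
import Mathlib

section
/- There exist absolute constants c > 0 and C > 0 such that for every complex number z = β + iτ with β ≥ 1 and τ ∈ ℝ, |∫₀¹ φ_z(u) du| ≥ c·(1 + |τ|)^{−C}. -/
/-!
Since `‖1 - e(u)‖ = 2 sin πu` on `(0, 1)`, the substitution `x = (1 - cos πu) / 2` turns
`B((z+1)/2, (z+1)/2)` into `π 4^{-z} ∫₀¹ φ_z`, and Legendre's duplication formula then gives
`∫₀¹ φ_z = Γ(z+1) / Γ(z/2+1)² = ((z+1) B(z/2+1, z/2+1))⁻¹`. As `x(1-x) ≤ 1/4`, the last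
Beta value is at most `2^{-β}` in norm, so `‖∫₀¹ φ_z‖ ≥ 2^β / ‖z+1‖ ≥ 1 / (1 + |τ|)`.
-/

open MeasureTheory

noncomputable def ec (t : ℝ) : ℂ := Complex.exp (2 * Real.pi * Complex.I * t)

noncomputable def phi (z : ℂ) (t : ℝ) : ℂ :=
  if 1 - ec t = 0 then 0 else Complex.exp (z * Real.log ‖1 - ec t‖)

open Real Set

noncomputable def haversine (θ : ℝ) : ℝ := (1 - cos θ) / 2

lemma haversine_mul_one_sub_haversine (θ : ℝ) :
    haversine θ * (1 - haversine θ) = (sin θ / 2) ^ 2 := by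
  unfold haversine; nlinarith [sin_sq_add_cos_sq θ]

lemma hasDerivAt_haversine (θ : ℝ) : HasDerivAt haversine (sin θ / 2) θ := by
  have := ((hasDerivAt_cos θ).const_sub 1).div_const 2
  rwa [neg_neg] at this

lemma continuous_haversine : Continuous haversine := by
  unfold haversine; fun_prop

lemma strictMonoOn_haversine : StrictMonoOn haversine (Icc 0 π) := fun _ hx _ hy hxy => by
  have := strictAntiOn_cos hx hy hxy
  unfold haversine; linarith

lemma haversine_image_Ioo : haversine '' Ioo 0 π = Ioo 0 1 := by
  have h0 : haversine 0 = 0 := by simp [haversine]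
  have hπ : haversine π = 1 := by norm_num [haversine]
  apply Subset.antisymm
  · rintro _ ⟨θ, hθ, rfl⟩
    rw [← h0, ← hπ]
    exact ⟨strictMonoOn_haversine (left_mem_Icc.2 pi_pos.le) (Ioo_subset_Icc_self hθ) hθ.1,
      strictMonoOn_haversine (Ioo_subset_Icc_self hθ) (right_mem_Icc.2 pi_pos.le) hθ.2⟩
  · simpa [h0, hπ] using intermediate_value_Ioo pi_pos.le continuous_haversine.continuousOn

lemma norm_one_sub_ec (u : ℝ) : ‖1 - ec u‖ = |2 * sin (π * u)| := by
  rw [norm_sub_rev, ec, ← Real.norm_eq_abs, show π * u = 2 * π * u / 2 by ring,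
    ← Complex.norm_exp_I_mul_ofReal_sub_one]
  congr 3; push_cast; ring

lemma sin_pi_mul_pos {u : ℝ} (hu : u ∈ Ioo (0 : ℝ) 1) : 0 < sin (π * u) :=
  sin_pos_of_pos_of_lt_pi (mul_pos pi_pos hu.1) (by nlinarith [hu.2, pi_pos])

lemma phi_eq_exp {w : ℂ} {u : ℝ} (hu : u ∈ Ioo (0 : ℝ) 1) :
    phi w u = Complex.exp (w * (Real.log 2 + Real.log (sin (π * u)))) := by
  have hs := sin_pi_mul_pos hu
  have hne : 1 - ec u ≠ 0 := by
    rw [← norm_ne_zero_iff, norm_one_sub_ec]; positivity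
  rw [phi, if_neg hne, norm_one_sub_ec, abs_of_pos (by positivity),
    Real.log_mul two_ne_zero hs.ne']
  push_cast; rfl

lemma image_haversine_pi_mul : (fun u => haversine (π * u)) '' Ioo 0 1 = Ioo 0 1 := by
  have hscale := image_mul_left_Ioo pi_pos (0 : ℝ) 1
  rw [mul_zero, mul_one] at hscale
  rw [← image_image haversine (π * ·), hscale, haversine_image_Ioo]

lemma ofReal_cpow_eq_exp {x : ℝ} (hx : 0 < x) (c : ℂ) :
    (x : ℂ) ^ c = Complex.exp (Real.log x * c) := by
  rw [Complex.cpow_def_of_ne_zero (by exact_mod_cast hx.ne'), Complex.ofReal_log hx.le]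

lemma betaIntegrand_haversine_pi_mul (w : ℂ) {u : ℝ} (hu : u ∈ Ioo (0 : ℝ) 1) :
    |π * (sin (π * u) / 2)| •
        ((haversine (π * u) : ℂ) ^ ((w + 1) / 2 - 1) *
          (1 - (haversine (π * u) : ℂ)) ^ ((w + 1) / 2 - 1))
      = π * (2 : ℂ) ^ (-2 * w) * phi w u := by
  set s := sin (π * u)
  set x := haversine (π * u)
  have hs : 0 < s := sin_pi_mul_pos hu
  have hx : x * (1 - x) = (s / 2) ^ 2 := haversine_mul_one_sub_haversine _
  obtain ⟨hx0, hx1⟩ : 0 < x ∧ x < 1 := by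
    rw [← mem_Ioo, ← image_haversine_pi_mul]; exact mem_image_of_mem _ hu
  rw [← sub_pos] at hx1
  have hlog : Real.log x + Real.log (1 - x) = 2 * (Real.log s - Real.log 2) := by
    rw [← Real.log_mul hx0.ne' hx1.ne', hx, Real.log_pow, Real.log_div hs.ne' two_ne_zero]
    push_cast; ring
  have hs2 : ((s / 2 : ℝ) : ℂ) = Complex.exp (Real.log s - Real.log 2) := by
    rw [← Complex.ofReal_sub, ← Complex.ofReal_exp, Real.exp_sub, Real.exp_log hs,
      Real.exp_log two_pos]
  have h2 : (2 : ℂ) ^ (-2 * w) = Complex.exp (Real.log 2 * (-2 * w)) := by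
    exact_mod_cast ofReal_cpow_eq_exp two_pos (-2 * w)
  -- both sides become `π * exp (w * (log s - log 2))`
  rw [phi_eq_exp hu, abs_of_pos (by positivity), Complex.real_smul,
    show (1 - (x : ℂ)) = ((1 - x : ℝ) : ℂ) by push_cast; ring,
    ofReal_cpow_eq_exp hx0, ofReal_cpow_eq_exp hx1, ← Complex.exp_add,
    h2, Complex.ofReal_mul, hs2]
  rw [mul_assoc, mul_assoc, ← Complex.exp_add, ← Complex.exp_add]
  congr 2
  have hlogC : (Real.log x : ℂ) + Real.log (1 - x) = 2 * ((Real.log s : ℂ) - Real.log 2) := by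
    exact_mod_cast hlog
  linear_combination ((w + 1) / 2 - 1) * hlogC

lemma betaIntegral_eq_integral_phi (w : ℂ) :
    Complex.betaIntegral ((w + 1) / 2) ((w + 1) / 2)
      = π * (2 : ℂ) ^ (-2 * w) * ∫ u in (0 : ℝ)..1, phi w u := by
  have hderiv : ∀ u ∈ Ioo (0 : ℝ) 1,
      HasDerivWithinAt (fun u => haversine (π * u)) (π * (sin (π * u) / 2)) (Ioo 0 1) u :=
    fun u _ => ((hasDerivAt_haversine _).comp u ((hasDerivAt_id u).const_mul π)).hasDerivWithinAt
      |>.congr_deriv (by simp [mul_comm])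
  have hinj : InjOn (fun u => haversine (π * u)) (Ioo 0 1) :=
    (strictMonoOn_haversine.comp ((strictMono_mul_left_of_pos pi_pos).strictMonoOn _)
      fun u hu => ⟨by nlinarith [hu.1, pi_pos], by nlinarith [hu.2, pi_pos]⟩).injOn
  rw [Complex.betaIntegral, intervalIntegral.integral_of_le zero_le_one,
    integral_Ioc_eq_integral_Ioo, ← image_haversine_pi_mul,
    integral_image_eq_integral_abs_deriv_smul measurableSet_Ioo hderiv hinj,
    intervalIntegral.integral_of_le zero_le_one, integral_Ioc_eq_integral_Ioo,
    ← integral_const_mul]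
  exact setIntegral_congr_fun measurableSet_Ioo fun u hu => betaIntegrand_haversine_pi_mul w hu

open Complex in
lemma integral_phi_eq_Gamma_div {z : ℂ} (hz : -1 < z.re) :
    ∫ u in (0 : ℝ)..1, phi z u = Gamma (z + 1) / Gamma (z / 2 + 1) ^ 2 := by
  have ha : 0 < ((z + 1) / 2).re := by simp; linarith
  have hbeta := Gamma_mul_Gamma_eq_betaIntegral ha ha
  rw [betaIntegral_eq_integral_phi, add_halves] at hbeta
  have hdup := Gamma_mul_Gamma_add_half ((z + 1) / 2)
  rw [show (z + 1) / 2 + 1 / 2 = z / 2 + 1 by ring, mul_div_cancel₀ _ two_ne_zero,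
    show 1 - (z + 1) = -z by ring] at hdup
  have hG : Gamma (z + 1) ≠ 0 := Gamma_ne_zero_of_re_pos (by simp; linarith)
  have hG' : Gamma (z / 2 + 1) ≠ 0 := Gamma_ne_zero_of_re_pos (by simp; linarith)
  have h2 : (2 : ℂ) ^ (-2 * z) = ((2 : ℂ) ^ (-z)) ^ 2 := by
    rw [← cpow_nat_mul]; ring_nf
  have hπ : ((√π : ℝ) : ℂ) ^ 2 = π := by
    rw [← ofReal_pow, Real.sq_sqrt pi_pos.le]
  have hne : Gamma (z + 1) * π * (2 : ℂ) ^ (-2 * z) ≠ 0 := by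
    have : (π : ℂ) ≠ 0 := ofReal_ne_zero.2 pi_ne_zero
    have : (2 : ℂ) ^ (-2 * z) ≠ 0 := by simp
    positivity
  rw [eq_div_iff (pow_ne_zero 2 hG')]
  apply mul_left_cancel₀ hne
  linear_combination (Gamma (z / 2 + 1)) ^ 2 * hbeta.symm
    + (Gamma ((z + 1) / 2) * Gamma (z / 2 + 1) + Gamma (z + 1) * 2 ^ (-z) * √π) * hdup
    + Gamma (z + 1) ^ 2 * (2 ^ (-z)) ^ 2 * hπ - Gamma (z + 1) ^ 2 * π * h2

open Complex in
lemma add_one_mul_integral_phi_mul_betaIntegral {z : ℂ} (hz : -1 < z.re) :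
    (z + 1) * (∫ u in (0 : ℝ)..1, phi z u) * betaIntegral (z / 2 + 1) (z / 2 + 1) = 1 := by
  have ha : 0 < (z / 2 + 1).re := by simp; linarith
  have hbeta := Gamma_mul_Gamma_eq_betaIntegral ha ha
  have hz1 : z + 1 ≠ 0 := fun h => by
    have := congrArg re h; simp at this; linarith
  rw [show z / 2 + 1 + (z / 2 + 1) = z + 1 + 1 by ring, Gamma_add_one _ hz1] at hbeta
  have hG : Gamma (z / 2 + 1) ≠ 0 := Gamma_ne_zero_of_re_pos ha
  rw [integral_phi_eq_Gamma_div hz, mul_div_assoc', div_mul_eq_mul_div,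
    div_eq_one_iff_eq (pow_ne_zero 2 hG), sq, hbeta]

lemma norm_betaIntegral_self_le {a : ℂ} (ha : 1 < a.re) :
    ‖Complex.betaIntegral a a‖ ≤ (4 ^ (a.re - 1))⁻¹ := by
  have hbound : ∀ x ∈ uIoc (0 : ℝ) 1,
      ‖(x : ℂ) ^ (a - 1) * (1 - (x : ℂ)) ^ (a - 1)‖ ≤ (4 ^ (a.re - 1))⁻¹ := by
    intro x hx
    rw [uIoc_of_le zero_le_one] at hx
    have hre : (a - 1).re ≠ 0 := by simp; linarith
    rw [norm_mul, Complex.norm_cpow_eq_rpow_re_of_nonneg hx.1.le hre,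
      show 1 - (x : ℂ) = ((1 - x : ℝ) : ℂ) by push_cast; ring,
      Complex.norm_cpow_eq_rpow_re_of_nonneg (sub_nonneg.2 hx.2) hre,
      ← Real.mul_rpow hx.1.le (sub_nonneg.2 hx.2), ← Real.inv_rpow (by norm_num)]
    exact Real.rpow_le_rpow (by nlinarith [hx.1, hx.2]) (by nlinarith [sq_nonneg (x - 1 / 2)])
      (by simp; linarith)
  simpa [Complex.betaIntegral] using intervalIntegral.norm_integral_le_of_norm_le_const hbound

lemma norm_add_one_le {z : ℂ} (hz : 0 ≤ z.re) : ‖z + 1‖ ≤ (z.re + 1) * (1 + |z.im|) := by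
  have := Complex.norm_le_abs_re_add_abs_im (z + 1)
  simp only [Complex.add_re, Complex.one_re, Complex.add_im, Complex.one_im, add_zero,
    abs_of_nonneg (by linarith : 0 ≤ z.re + 1)] at this
  nlinarith [abs_nonneg z.im]

lemma add_one_le_two_rpow {x : ℝ} (hx : 1 ≤ x) : x + 1 ≤ 2 ^ x := by
  have := one_add_mul_self_le_rpow_one_add (by norm_num : (-1 : ℝ) ≤ 1) hx
  norm_num at this; linarith

lemma inv_one_add_abs_im_le_norm_integral_phi {z : ℂ} (hz : 1 ≤ z.re) :
    (1 + |z.im|)⁻¹ ≤ ‖∫ u in (0 : ℝ)..1, phi z u‖ := by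
  have hB : ‖Complex.betaIntegral (z / 2 + 1) (z / 2 + 1)‖ ≤ (2 ^ z.re)⁻¹ := by
    have h4 : (4 : ℝ) ^ ((z / 2 + 1).re - 1) = 2 ^ z.re := by
      rw [show (4 : ℝ) = 2 ^ (2 : ℝ) by norm_num, ← Real.rpow_mul zero_le_two]
      congr 1; simp; ring
    exact h4 ▸ norm_betaIntegral_self_le (by simp; linarith)
  have hprod := congrArg norm (add_one_mul_integral_phi_mul_betaIntegral (by linarith : -1 < z.re))
  rw [norm_mul, norm_mul, norm_one] at hprod
  set I := ∫ u in (0 : ℝ)..1, phi z u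
  rw [inv_le_iff_one_le_mul₀ (by positivity)]
  calc 1 = ‖z + 1‖ * ‖I‖ * ‖Complex.betaIntegral (z / 2 + 1) (z / 2 + 1)‖ := hprod.symm
    _ ≤ (2 ^ z.re * (1 + |z.im|)) * ‖I‖ * (2 ^ z.re)⁻¹ := by
      gcongr
      exact (norm_add_one_le (by linarith)).trans
        (mul_le_mul_of_nonneg_right (add_one_le_two_rpow hz) (by positivity))
    _ = _ := by field_simp

/-- for `z = β + iτ` with `β ≥ 1`,
`|∫₀¹ φ_z(u) du| ≫ (1 + |τ|)^{-O(1)}`. -/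
theorem phi_integral_lower_bound :
    ∃ c C : ℝ, 0 < c ∧ 0 < C ∧
      ∀ z : ℂ, 1 ≤ z.re →
        c * (1 + |z.im|) ^ (-C) ≤ ‖∫ u in (0:ℝ)..1, phi z u‖ :=
  ⟨1, 1, one_pos, one_pos, fun z hz => by
    simpa [Real.rpow_neg_one] using inv_one_add_abs_im_le_norm_integral_phi hz⟩
end

section
/- Let (Z_ℓ)_{ℓ≥1} be independent Poisson random variables with E[Z_ℓ] = 1/ℓ and set Y_N(t) := Σ_{ℓ ≤ N} Z_ℓ·log|1 − e(ℓt)|. There exist absolute constants c, c', C > 0 such that for every α ∈ (0,1) and every integer ξ₀ ≥ 1 with ξ₀ ≤ c'·α²·log N, one has, except on an event of probability at most C·ξ₀·N^{−cα/ξ₀}: sup_{t ∈ Maj(ξ₀, N^{−α})} Y_N(t) ≤ −α²·(log N)² / (128·ξ₀). -/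
open MeasureTheory ProbabilityTheory Finset

/-- `‖s‖`, the distance from `s` to the nearest integer. -/
noncomputable def distInt (s : ℝ) : ℝ := |s - round s|

/-- The major arcs `Maj(ξ₀,κ) = ∪_{1 ≤ ξ ≤ ξ₀} {t ∈ [0,1) : ‖ξt‖ ≤ κ}`. -/
def MajSet (ξ₀ : ℕ) (κ : ℝ) : Set ℝ :=
  {t | t ∈ Set.Ico (0:ℝ) 1 ∧ ∃ ξ : ℕ, 1 ≤ ξ ∧ ξ ≤ ξ₀ ∧ distInt ((ξ : ℝ) * t) ≤ κ}

/-- Extended-real logarithm with `log 0 = -∞`. -/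
noncomputable def elog (x : ℝ) : EReal := if x = 0 then ⊥ else ((Real.log x : ℝ) : EReal)

/-- The Poisson field `Y_J(t) = Σ_{ℓ ∈ J} Z_ℓ log|1 - e(ℓt)| ∈ [-∞,∞)`. -/
noncomputable def Yfield (J : Finset ℕ) (Zω : ℕ → ℕ) (t : ℝ) : EReal :=
  ∑ ℓ ∈ J, ((Zω ℓ : ℝ) : EReal) * elog (‖1 - ec ((ℓ : ℝ) * t)‖)

/-!
On a major arc `‖ξt‖ ≤ N^{-α}` with `ξ ≤ ξ₀`, each multiple `ℓ = ξm` with `m ≤ M := ⌊N^{α/2}⌋`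
has `|1 - e(ℓt)| ≤ 2πM N^{-α} ≤ N^{-α/4}`, so these `ℓ` contribute at most
`-(α log N / 4) · Σ_{m ≤ M} Z_{ξm}` to `Y_N(t)`, while every other term is at most `Z_ℓ log 2`.
The total count `Σ_{ℓ ≤ N} Z_ℓ` is Poisson of mean `H_N ≤ 1 + log N`, and the count along each
progression is Poisson of mean `H_M / ξ ≥ α log N / (2ξ₀)`. Chernoff bounds keep the first below
`4(log N + 1)` and each of the `ξ₀` others above `α log N / (16ξ₀)`, except with probability
`N^{-α/(16ξ₀)}` each; on the remaining event the negative contribution wins.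
-/

open Real
open scoped NNReal Nat

lemma distInt_natCast_mul_le (m : ℕ) (s : ℝ) : distInt (m * s) ≤ m * distInt s :=
  calc |m * s - round (m * s)| ≤ |m * s - ((m * round s : ℤ) : ℝ)| := round_le _ _
    _ = m * |s - round s| := by push_cast; rw [← mul_sub, abs_mul, Nat.abs_cast]

lemma ec_eq_exp (s : ℝ) : ec s = Complex.exp (Complex.I * (2 * π * s : ℝ)) := by
  rw [ec]; push_cast; ring_nf

lemma ec_sub_intCast (s : ℝ) (n : ℤ) : ec (s - n) = ec s := by
  rw [ec, ec, Complex.ofReal_sub, mul_sub, Complex.ofReal_intCast, mul_comm _ (n : ℂ)]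
  exact Complex.exp_periodic.sub_int_mul_eq n

lemma norm_one_sub_ec_le_two (s : ℝ) : ‖1 - ec s‖ ≤ 2 := by
  refine (norm_sub_le _ _).trans ?_
  rw [ec_eq_exp, Complex.norm_exp_I_mul_ofReal, norm_one]; norm_num

lemma norm_one_sub_ec_le (s : ℝ) : ‖1 - ec s‖ ≤ 2 * π * distInt s := by
  rw [← ec_sub_intCast s (round s), ec_eq_exp, norm_sub_rev]
  refine norm_exp_I_mul_ofReal_sub_one_le.trans_eq ?_
  rw [Real.norm_eq_abs, abs_mul, abs_of_pos (by positivity), distInt]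

lemma EReal.coe_sum {ι : Type*} (s : Finset ι) (f : ι → ℝ) :
    ((∑ i ∈ s, f i : ℝ) : EReal) = ∑ i ∈ s, (f i : EReal) :=
  map_sum (⟨⟨Real.toEReal, EReal.coe_zero⟩, EReal.coe_add⟩ : ℝ →+ EReal) f s

lemma coe_mul_elog_le {z x r : ℝ} (hz : 0 ≤ z) (hx : 0 ≤ x) (h : x ≤ exp r) :
    (z : EReal) * elog x ≤ ((z * r : ℝ) : EReal) := by
  unfold elog
  split_ifs with hx0
  · rcases hz.eq_or_lt with rfl | hz
    · simp
    · rw [EReal.mul_bot_of_pos (EReal.coe_pos.2 hz)]; exact bot_le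
  · rw [← EReal.coe_mul, EReal.coe_le_coe_iff]
    exact mul_le_mul_of_nonneg_left ((log_le_iff_le_exp (hx.lt_of_ne' hx0)).2 h) hz

lemma Yfield_le_sum_mul {J : Finset ℕ} (Zω : ℕ → ℕ) {t : ℝ} {w : ℕ → ℝ}
    (hw : ∀ ℓ ∈ J, ‖1 - ec (ℓ * t)‖ ≤ exp (w ℓ)) :
    Yfield J Zω t ≤ ((∑ ℓ ∈ J, (Zω ℓ : ℝ) * w ℓ : ℝ) : EReal) := by
  rw [EReal.coe_sum]
  exact sum_le_sum fun ℓ hℓ ↦ coe_mul_elog_le (Nat.cast_nonneg _) (norm_nonneg _) (hw ℓ hℓ)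

def firstMultiples (ξ M : ℕ) : Finset ℕ := (Icc 1 M).image (ξ * ·)

lemma firstMultiples_subset_Icc {ξ M N : ℕ} (hξ : 0 < ξ) (h : ξ * M ≤ N) :
    firstMultiples ξ M ⊆ Icc 1 N := by
  intro ℓ hℓ
  obtain ⟨m, hm, rfl⟩ := mem_image.1 hℓ
  rw [mem_Icc] at hm ⊢
  exact ⟨Nat.mul_pos hξ hm.1, (Nat.mul_le_mul_left ξ hm.2).trans h⟩

lemma sum_inv_firstMultiples {ξ : ℕ} (hξ : 0 < ξ) (M : ℕ) :
    ∑ ℓ ∈ firstMultiples ξ M, (ℓ : ℝ)⁻¹ = (ξ : ℝ)⁻¹ * harmonic M := by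
  rw [firstMultiples, sum_image fun a _ b _ h ↦ Nat.eq_of_mul_eq_mul_left hξ h, harmonic_eq_sum_Icc,
    Rat.cast_sum, mul_sum]
  push_cast
  simp only [mul_inv]

lemma norm_one_sub_ec_le_of_mem_firstMultiples {ξ M ℓ : ℕ} {t κ : ℝ}
    (hℓ : ℓ ∈ firstMultiples ξ M) (ht : distInt (ξ * t) ≤ κ) :
    ‖1 - ec (ℓ * t)‖ ≤ 2 * π * M * κ := by
  obtain ⟨m, hm, rfl⟩ := mem_image.1 hℓ
  have hmM : (m : ℝ) ≤ M := by exact_mod_cast (mem_Icc.1 hm).2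
  have hκ : 0 ≤ κ := (abs_nonneg _).trans ht
  calc ‖1 - ec ((ξ * m : ℕ) * t)‖ ≤ 2 * π * distInt (m * (ξ * t)) := by
        push_cast; rw [mul_comm (ξ : ℝ), mul_assoc]; exact norm_one_sub_ec_le _
    _ ≤ 2 * π * (m * κ) := by
        gcongr
        exact (distInt_natCast_mul_le m _).trans (by gcongr)
    _ ≤ 2 * π * (M * κ) := by gcongr
    _ = 2 * π * M * κ := by ring

lemma Yfield_le_of_distInt_le {J : Finset ℕ} {ξ M : ℕ} (hsub : firstMultiples ξ M ⊆ J)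
    (Zω : ℕ → ℕ) {t κ ρ : ℝ} (ht : distInt (ξ * t) ≤ κ) (hρ : 2 * π * M * κ ≤ exp ρ) :
    Yfield J Zω t ≤
      ((ρ * ∑ ℓ ∈ firstMultiples ξ M, (Zω ℓ : ℝ) + log 2 * ∑ ℓ ∈ J, (Zω ℓ : ℝ) : ℝ) : EReal) := by
  set A := firstMultiples ξ M
  refine (Yfield_le_sum_mul Zω (w := fun ℓ ↦ if ℓ ∈ A then ρ else log 2) fun ℓ _ ↦ ?_).trans ?_
  · split_ifs with hℓ
    · exact (norm_one_sub_ec_le_of_mem_firstMultiples hℓ ht).trans hρ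
    · rw [exp_log two_pos]; exact norm_one_sub_ec_le_two _
  · rw [EReal.coe_le_coe_iff]
    have hpt : ∀ ℓ ∈ J, (Zω ℓ : ℝ) * (if ℓ ∈ A then ρ else log 2)
        ≤ (if ℓ ∈ A then ρ * Zω ℓ else 0) + log 2 * Zω ℓ := fun ℓ _ ↦ by
      have : 0 ≤ log 2 * Zω ℓ := by positivity
      split_ifs <;> linarith
    calc _ ≤ ∑ ℓ ∈ J, ((if ℓ ∈ A then ρ * Zω ℓ else 0) + log 2 * Zω ℓ) := sum_le_sum hpt
      _ = _ := by rw [sum_add_distrib, sum_ite_mem, inter_eq_right.2 hsub, mul_sum, mul_sum]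

lemma iSup_Yfield_majSet_le {N ξ₀ M : ℕ} (hM : ξ₀ * M ≤ N) (Zω : ℕ → ℕ) {κ ρ a : ℝ}
    (hρ : 2 * π * M * κ ≤ exp ρ) (hρ0 : ρ ≤ 0)
    (hT : ∀ ξ ∈ Icc 1 ξ₀, a ≤ ∑ ℓ ∈ firstMultiples ξ M, (Zω ℓ : ℝ)) :
    ⨆ t : MajSet ξ₀ κ, Yfield (Icc 1 N) Zω t ≤
      ((ρ * a + log 2 * ∑ ℓ ∈ Icc 1 N, (Zω ℓ : ℝ) : ℝ) : EReal) := by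
  refine iSup_le fun ⟨t, _, ξ, hξ1, hξ2, ht⟩ ↦ ?_
  have hsub := firstMultiples_subset_Icc hξ1 ((Nat.mul_le_mul_right M hξ2).trans hM)
  refine (Yfield_le_of_distInt_le hsub Zω ht hρ).trans (EReal.coe_le_coe_iff.2 ?_)
  have := mul_le_mul_of_nonpos_left (hT ξ (mem_Icc.2 ⟨hξ1, hξ2⟩)) hρ0
  linarith

lemma toMeasure_poissonPMF (r : ℝ≥0) : (poissonPMF r).toMeasure = poissonMeasure r :=
  Measure.ext_of_singleton fun n ↦ by
    rw [PMF.toMeasure_apply_singleton _ _ (.singleton n), poissonMeasure_singleton]; rfl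

lemma hasSum_poisson_mul_exp (r : ℝ≥0) (t : ℝ) :
    HasSum (fun n : ℕ ↦ exp (-r) * r ^ n / n ! * exp (t * n)) (exp (r * (exp t - 1))) := by
  have h := (NormedSpace.expSeries_div_hasSum_exp ((r : ℝ) * exp t)).mul_left (exp (-r))
  rw [← exp_eq_exp_ℝ, ← exp_add, neg_add_eq_sub, ← mul_sub_one] at h
  refine h.congr_fun fun n ↦ ?_
  rw [mul_pow, ← exp_nat_mul, mul_comm (n : ℝ)]
  ring

lemma integrable_exp_mul_poissonMeasure (r : ℝ≥0) (t : ℝ) :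
    Integrable (fun n : ℕ ↦ exp (t * n)) (poissonMeasure r) := by
  rw [integrable_poissonMeasure_iff]
  simpa only [norm_eq_abs, abs_exp] using (hasSum_poisson_mul_exp r t).summable

lemma mgf_natCast_poissonMeasure (r : ℝ≥0) (t : ℝ) :
    mgf (fun n : ℕ ↦ (n : ℝ)) (poissonMeasure r) t = exp (r * (exp t - 1)) := by
  rw [mgf, integral_poissonMeasure]
  exact (hasSum_poisson_mul_exp r t).tsum_eq

namespace ProbabilityTheory.iIndepFun

variable {Ω ι : Type*} [MeasurableSpace Ω] {μ : Measure Ω} {X : ι → Ω → ℕ} {r : ι → ℝ≥0}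
  {s : Finset ι}

lemma mgf_sum_natCast_of_poisson (hind : iIndepFun X μ) (hX : ∀ i, Measurable (X i))
    (hlaw : ∀ i ∈ s, μ.map (X i) = poissonMeasure (r i)) (t : ℝ) :
    mgf (fun ω ↦ ∑ i ∈ s, (X i ω : ℝ)) μ t = exp ((exp t - 1) * ∑ i ∈ s, (r i : ℝ)) := by
  have hind' : iIndepFun (fun i ω ↦ (X i ω : ℝ)) μ :=
    hind.comp (fun _ (n : ℕ) ↦ (n : ℝ)) fun _ ↦ measurable_from_top
  rw [← sum_fn, hind'.mgf_sum (fun i ↦ measurable_from_top.comp (hX i)), mul_sum, exp_sum]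
  refine prod_congr rfl fun i hi ↦ ?_
  rw [mul_comm, ← mgf_natCast_poissonMeasure, ← hlaw i hi,
    mgf_map (hX i).aemeasurable (by fun_prop)]
  rfl

lemma integrable_exp_mul_sum_natCast_of_poisson (hind : iIndepFun X μ)
    (hX : ∀ i, Measurable (X i)) (hlaw : ∀ i ∈ s, μ.map (X i) = poissonMeasure (r i)) (t : ℝ) :
    Integrable (fun ω ↦ exp (t * ∑ i ∈ s, (X i ω : ℝ))) μ := by
  have := hind.isProbabilityMeasure
  have hind' : iIndepFun (fun i ω ↦ (X i ω : ℝ)) μ :=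
    hind.comp (fun _ (n : ℕ) ↦ (n : ℝ)) fun _ ↦ measurable_from_top
  have := hind'.integrable_exp_mul_sum (t := t) (s := s)
    (fun i ↦ measurable_from_top.comp (hX i)) fun i hi ↦ by
      have h := integrable_exp_mul_poissonMeasure (r i) t
      rw [← hlaw i hi] at h
      exact (integrable_map_measure (by fun_prop) (hX i).aemeasurable).1 h
  simpa only [Finset.sum_apply] using this

lemma measureReal_sum_natCast_ge_le_of_poisson (hind : iIndepFun X μ)
    (hX : ∀ i, Measurable (X i)) (hlaw : ∀ i ∈ s, μ.map (X i) = poissonMeasure (r i))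
    {t : ℝ} (ht : 0 ≤ t) (ε : ℝ) :
    μ.real {ω | ε ≤ ∑ i ∈ s, (X i ω : ℝ)} ≤ exp (-t * ε + (exp t - 1) * ∑ i ∈ s, (r i : ℝ)) := by
  have := hind.isProbabilityMeasure
  rw [exp_add, ← hind.mgf_sum_natCast_of_poisson hX hlaw]
  exact measure_ge_le_exp_mul_mgf ε ht (hind.integrable_exp_mul_sum_natCast_of_poisson hX hlaw t)

lemma measureReal_sum_natCast_le_le_of_poisson (hind : iIndepFun X μ)
    (hX : ∀ i, Measurable (X i)) (hlaw : ∀ i ∈ s, μ.map (X i) = poissonMeasure (r i))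
    {t : ℝ} (ht : t ≤ 0) (ε : ℝ) :
    μ.real {ω | ∑ i ∈ s, (X i ω : ℝ) ≤ ε} ≤ exp (-t * ε + (exp t - 1) * ∑ i ∈ s, (r i : ℝ)) := by
  have := hind.isProbabilityMeasure
  rw [exp_add, ← hind.mgf_sum_natCast_of_poisson hX hlaw]
  exact measure_le_le_exp_mul_mgf ε ht (hind.integrable_exp_mul_sum_natCast_of_poisson hX hlaw t)

lemma measureReal_four_mul_le_sum_natCast_le_of_poisson (hind : iIndepFun X μ)
    (hX : ∀ i, Measurable (X i)) (hlaw : ∀ i ∈ s, μ.map (X i) = poissonMeasure (r i))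
    {x : ℝ} (hx : ∑ i ∈ s, (r i : ℝ) ≤ x) :
    μ.real {ω | 4 * x ≤ ∑ i ∈ s, (X i ω : ℝ)} ≤ exp (-x) := by
  refine (hind.measureReal_sum_natCast_ge_le_of_poisson hX hlaw (log_nonneg one_le_two) _).trans
    (exp_le_exp.2 ?_)
  have hr : 0 ≤ ∑ i ∈ s, (r i : ℝ) := sum_nonneg fun i _ ↦ (r i).2
  rw [exp_log two_pos]
  nlinarith [log_two_gt_d9]

lemma measureReal_sum_natCast_le_le_exp_neg_of_poisson (hind : iIndepFun X μ)
    (hX : ∀ i, Measurable (X i)) (hlaw : ∀ i ∈ s, μ.map (X i) = poissonMeasure (r i))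
    {a : ℝ} (ha : 0 ≤ a) (h : 8 * a ≤ ∑ i ∈ s, (r i : ℝ)) :
    μ.real {ω | ∑ i ∈ s, (X i ω : ℝ) ≤ a} ≤ exp (-a) := by
  refine (hind.measureReal_sum_natCast_le_le_of_poisson hX hlaw
    (neg_nonpos.2 (log_nonneg one_le_two)) _).trans (exp_le_exp.2 ?_)
  rw [exp_neg, exp_log two_pos]
  nlinarith [log_two_lt_d9]

end ProbabilityTheory.iIndepFun

lemma natCast_mul_floor_rpow_le {N ξ₀ : ℕ} {α : ℝ} (hN : 1 ≤ (N : ℝ)) (hα : α ≤ 1)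
    (hξ₀ : 2 * (ξ₀ : ℝ) ≤ log N) : ξ₀ * ⌊(N : ℝ) ^ (α / 2)⌋₊ ≤ N := by
  have hM : (⌊(N : ℝ) ^ (α / 2)⌋₊ : ℝ) ≤ N ^ (1 / 2 : ℝ) :=
    (Nat.floor_le (by positivity)).trans (rpow_le_rpow_of_exponent_le hN (by linarith))
  have hlog : log N ≤ 2 * N ^ (1 / 2 : ℝ) := by
    have := log_le_rpow_div (Nat.cast_nonneg N) (by norm_num : (0 : ℝ) < 1 / 2)
    linarith
  have : (ξ₀ : ℝ) * ⌊(N : ℝ) ^ (α / 2)⌋₊ ≤ N :=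
    calc _ ≤ (N : ℝ) ^ (1 / 2 : ℝ) * N ^ (1 / 2 : ℝ) := by gcongr; linarith
      _ = N := by rw [← rpow_add (by linarith)]; norm_num
  exact_mod_cast this

lemma two_pi_mul_floor_rpow_mul_rpow_neg_le {N : ℕ} {α : ℝ} (hN : 0 < (N : ℝ))
    (h : 24 ≤ α * log N) :
    2 * π * ⌊(N : ℝ) ^ (α / 2)⌋₊ * (N : ℝ) ^ (-α) ≤ exp (-(α * log N / 4)) := by
  have h2π : 2 * π ≤ exp (α * log N / 4) := by
    linarith [pi_lt_d2, add_one_le_exp (α * log N / 4)]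
  calc 2 * π * ⌊(N : ℝ) ^ (α / 2)⌋₊ * (N : ℝ) ^ (-α)
      ≤ exp (α * log N / 4) * (N : ℝ) ^ (α / 2) * (N : ℝ) ^ (-α) := by
        gcongr; exact Nat.floor_le (by positivity)
    _ = exp (-(α * log N / 4)) := by
        rw [rpow_def_of_pos hN, rpow_def_of_pos hN, ← exp_add, ← exp_add]; ring_nf

lemma mul_log_div_two_le_harmonic_floor_rpow {N : ℕ} (α : ℝ) (hN : 0 < (N : ℝ)) :
    α * log N / 2 ≤ harmonic ⌊(N : ℝ) ^ (α / 2)⌋₊ :=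
  calc α * log N / 2 = log ((N : ℝ) ^ (α / 2)) := by rw [log_rpow hN]; ring
    _ ≤ log ↑(⌊(N : ℝ) ^ (α / 2)⌋₊ + 1) := by
        push_cast; exact log_le_log (by positivity) (Nat.lt_floor_add_one _).le
    _ ≤ harmonic ⌊(N : ℝ) ^ (α / 2)⌋₊ := log_add_one_le_harmonic _

lemma log_bounds_of_le_sq_mul_log {N ξ₀ : ℕ} {α : ℝ} (hα : 0 < α) (hα1 : α < 1) (hξ₀ : 1 ≤ ξ₀)
    (hlog : 512 * (ξ₀ : ℝ) ≤ α ^ 2 * log N) :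
    1 < (N : ℝ) ∧ 512 * (ξ₀ : ℝ) ≤ α * log N ∧ α * log N ≤ log N := by
  have hξ₀' : (1 : ℝ) ≤ ξ₀ := by exact_mod_cast hξ₀
  have hL : 0 < log N := by nlinarith
  refine ⟨(log_pos_iff (Nat.cast_nonneg N)).1 hL, by nlinarith, by nlinarith⟩

lemma iSup_Yfield_majSet_le_of_counts {N ξ₀ : ℕ} {α : ℝ} (hα : 0 < α) (hα1 : α < 1)
    (hξ₀ : 1 ≤ ξ₀) (hlog : 512 * (ξ₀ : ℝ) ≤ α ^ 2 * log N) (Zω : ℕ → ℕ)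
    (hS : ∑ ℓ ∈ Icc 1 N, (Zω ℓ : ℝ) < 4 * (log N + 1))
    (hT : ∀ ξ ∈ Icc 1 ξ₀,
      α * log N / (16 * ξ₀) < ∑ ℓ ∈ firstMultiples ξ ⌊(N : ℝ) ^ (α / 2)⌋₊, (Zω ℓ : ℝ)) :
    ⨆ t : MajSet ξ₀ ((N : ℝ) ^ (-α)), Yfield (Icc 1 N) Zω t ≤
      ((-(α ^ 2) * log N ^ 2 / (128 * ξ₀) : ℝ) : EReal) := by
  obtain ⟨hN, hαL, hαL'⟩ := log_bounds_of_le_sq_mul_log hα hα1 hξ₀ hlog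
  have hξ₀' : (1 : ℝ) ≤ ξ₀ := by exact_mod_cast hξ₀
  refine (iSup_Yfield_majSet_le (natCast_mul_floor_rpow_le hN.le hα1.le (by linarith)) Zω
    (two_pi_mul_floor_rpow_mul_rpow_neg_le (by linarith) (by linarith)) (by linarith)
    fun ξ hξ ↦ (hT ξ hξ).le).trans (EReal.coe_le_coe_iff.2 ?_)
  set L := log N
  have hρa : -(α * L / 4) * (α * L / (16 * ξ₀)) = -(2 * (α ^ 2 * L ^ 2 / (128 * ξ₀))) := by
    field_simp; ring
  have hS' : log 2 * ∑ ℓ ∈ Icc 1 N, (Zω ℓ : ℝ) ≤ α ^ 2 * L ^ 2 / (128 * ξ₀) := by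
    have hS0 : 0 ≤ ∑ ℓ ∈ Icc 1 N, (Zω ℓ : ℝ) := by positivity
    have h4L : log 2 * ∑ ℓ ∈ Icc 1 N, (Zω ℓ : ℝ) ≤ 4 * L := by nlinarith [log_two_lt_d9]
    rw [le_div_iff₀ (by positivity)]
    nlinarith
  linarith [show -(α ^ 2) * L ^ 2 / (128 * ξ₀) = -(α ^ 2 * L ^ 2 / (128 * ξ₀)) by ring]

lemma measureReal_exceptional_le {Ω : Type*} [MeasurableSpace Ω] {μ : Measure Ω}
    {Z : ℕ → Ω → ℕ} (hind : iIndepFun Z μ) (hZ : ∀ ℓ, Measurable (Z ℓ)) {N ξ₀ : ℕ}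
    (hlaw : ∀ ℓ ∈ Icc 1 N, μ.map (Z ℓ) = poissonMeasure (ℓ : ℝ≥0)⁻¹) {α : ℝ} (hα : 0 < α)
    (hα1 : α < 1) (hξ₀ : 1 ≤ ξ₀) (hlog : 512 * (ξ₀ : ℝ) ≤ α ^ 2 * log N) :
    μ.real ({ω | 4 * (log N + 1) ≤ ∑ ℓ ∈ Icc 1 N, (Z ℓ ω : ℝ)} ∪
      ⋃ ξ ∈ Icc 1 ξ₀, {ω | ∑ ℓ ∈ firstMultiples ξ ⌊(N : ℝ) ^ (α / 2)⌋₊, (Z ℓ ω : ℝ) ≤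
        α * log N / (16 * ξ₀)}) ≤ 2 * ξ₀ * (N : ℝ) ^ (-(1 / 16 * α / ξ₀)) := by
  obtain ⟨hN, hαL, hαL'⟩ := log_bounds_of_le_sq_mul_log hα hα1 hξ₀ hlog
  have hξ₀' : (1 : ℝ) ≤ ξ₀ := by exact_mod_cast hξ₀
  set L := log N
  set M := ⌊(N : ℝ) ^ (α / 2)⌋₊
  set a := α * L / (16 * ξ₀)
  have ha : 0 ≤ a := by positivity
  have hS : μ.real {ω | 4 * (L + 1) ≤ ∑ ℓ ∈ Icc 1 N, (Z ℓ ω : ℝ)} ≤ exp (-a) := by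
    refine (hind.measureReal_four_mul_le_sum_natCast_le_of_poisson hZ hlaw ?_).trans
      (exp_le_exp.2 ?_)
    · have := harmonic_le_one_add_log N
      rw [harmonic_eq_sum_Icc] at this
      push_cast at this ⊢
      linarith
    · have : a ≤ L := by rw [div_le_iff₀ (by positivity)]; nlinarith
      linarith
  have hT : ∀ ξ ∈ Icc 1 ξ₀,
      μ.real {ω | ∑ ℓ ∈ firstMultiples ξ M, (Z ℓ ω : ℝ) ≤ a} ≤ exp (-a) := by
    intro ξ hξ
    obtain ⟨hξ1, hξ2⟩ := mem_Icc.1 hξ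
    have hsub := firstMultiples_subset_Icc hξ1
      ((Nat.mul_le_mul_right M hξ2).trans (natCast_mul_floor_rpow_le hN.le hα1.le (by linarith)))
    refine hind.measureReal_sum_natCast_le_le_exp_neg_of_poisson hZ
      (fun ℓ hℓ ↦ hlaw ℓ (hsub hℓ)) ha ?_
    have hH := mul_log_div_two_le_harmonic_floor_rpow α (by linarith : (0 : ℝ) < N)
    have hξ' : (ξ : ℝ) ≤ ξ₀ := by exact_mod_cast hξ2
    push_cast
    rw [sum_inv_firstMultiples hξ1]
    calc 8 * a = (ξ₀ : ℝ)⁻¹ * (α * L / 2) := by simp only [a]; field_simp; ring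
      _ ≤ (ξ : ℝ)⁻¹ * harmonic M := by gcongr
  have hNa : (N : ℝ) ^ (-(1 / 16 * α / ξ₀)) = exp (-a) := by
    rw [rpow_def_of_pos (by linarith)]; simp only [a, L]; ring_nf
  calc _ ≤ μ.real {ω | 4 * (L + 1) ≤ ∑ ℓ ∈ Icc 1 N, (Z ℓ ω : ℝ)} +
        ∑ ξ ∈ Icc 1 ξ₀, μ.real {ω | ∑ ℓ ∈ firstMultiples ξ M, (Z ℓ ω : ℝ) ≤ a} :=
        (measureReal_union_le _ _).trans (by gcongr; exact measureReal_biUnion_finset_le _ _)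
    _ ≤ exp (-a) + ∑ ξ ∈ Icc 1 ξ₀, exp (-a) := add_le_add hS (sum_le_sum hT)
    _ = (1 + ξ₀) * exp (-a) := by
        simp only [sum_const, Nat.card_Icc, add_tsub_cancel_right, nsmul_eq_mul]; ring
    _ ≤ 2 * ξ₀ * (N : ℝ) ^ (-(1 / 16 * α / ξ₀)) := by
        rw [hNa]; exact mul_le_mul_of_nonneg_right (by linarith) (exp_pos _).le

/-- upper bound for the Poisson field on major arcs: except on an event
of probability `O(ξ₀ N^{-cα/ξ₀})`,
`sup_{t ∈ Maj(ξ₀, N^{-α})} Y_N(t) ≤ -α²(log N)²/(128 ξ₀)`. -/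
theorem poisson_field_major_arcs :
    ∃ c c' C : ℝ, 0 < c ∧ 0 < c' ∧ 0 < C ∧
      ∀ (Ω : Type) (_ : MeasurableSpace Ω) (μ : Measure Ω), IsProbabilityMeasure μ →
      ∀ (Z : ℕ → Ω → ℕ),
        (∀ ℓ, Measurable (Z ℓ)) →
        iIndepFun Z μ →
        (∀ ℓ : ℕ, 1 ≤ ℓ → Measure.map (Z ℓ) μ = ((poissonPMF ((ℓ : NNReal)⁻¹)).toMeasure)) →
      ∀ (N : ℕ) (α : ℝ) (ξ₀ : ℕ),
        0 < α → α < 1 → 1 ≤ ξ₀ → (ξ₀ : ℝ) ≤ c' * α ^ 2 * Real.log N →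
        μ {ω | ¬ (⨆ t : MajSet ξ₀ ((N : ℝ) ^ (-α)),
                    Yfield (Finset.Icc 1 N) (fun ℓ => Z ℓ ω) (t : ℝ))
                  ≤ ((-(α ^ 2) * (Real.log N) ^ 2 / (128 * (ξ₀ : ℝ)) : ℝ) : EReal)}
          ≤ ENNReal.ofReal (C * (ξ₀ : ℝ) * (N : ℝ) ^ (-(c * α / (ξ₀ : ℝ)))) := by
  refine ⟨1 / 16, 1 / 512, 2, by norm_num, by norm_num, by norm_num, ?_⟩
  intro Ω _ μ _ Z hZ hind hlaw N α ξ₀ hα hα1 hξ₀ hξ₀N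
  have hlog : 512 * (ξ₀ : ℝ) ≤ α ^ 2 * log N := by linarith
  have hlaw' : ∀ ℓ ∈ Icc 1 N, μ.map (Z ℓ) = poissonMeasure (ℓ : ℝ≥0)⁻¹ := fun ℓ hℓ ↦
    (hlaw ℓ (mem_Icc.1 hℓ).1).trans (toMeasure_poissonPMF _)
  refine (measure_mono fun ω hω ↦ ?_).trans ((ofReal_measureReal).symm.trans_le
    (ENNReal.ofReal_le_ofReal (measureReal_exceptional_le hind hZ hlaw' hα hα1 hξ₀ hlog)))
  by_contra hE
  simp only [Set.mem_union, Set.mem_iUnion, Set.mem_ofPred_eq, not_or, not_exists, not_le] at hE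
  exact hω (iSup_Yfield_majSet_le_of_counts hα hα1 hξ₀ hlog _ hE.1 hE.2)
end

section
/- Let q ≥ 1 and ξ ≥ 1 be integers, θ ∈ ℝ, and κ ∈ (0,1/2). Then there is an absolute constant C > 0 such that | |T_{q,θ} ∩ B_ξ(κ)| − 2κq | ≤ C·ξ. -/
open Finset
open scoped Classical

/-- The rotated mesh `T_{q,θ} = {(j/q + θ/q²) mod 1 : 0 ≤ j ≤ q-1} ⊆ [0,1)`. -/
noncomputable def meshT (q : ℕ) (θ : ℝ) : Finset ℝ :=
  (Finset.range q).image (fun j => Int.fract ((j : ℝ) / q + θ / q ^ 2))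

/-! With `d = gcd ξ q`, `ξ = d a` and `q = d Q`, the condition `‖ξ t‖ ≤ κ` on the mesh point
`t = j/q + θ/q²` reads `{a j / Q + γ} ≤ 2κ` with `γ = ξθ/q² + κ`; it is `Q`-periodic in `j`, so the
count is `d` times the count over `j < Q`. As `a` is invertible mod `Q`, the points `{a j / Q + γ}`,
`j < Q`, are exactly the points `(s + δ)/Q`, `s < Q`, for some `δ ∈ [0,1)`, and `2κQ + O(1)` of them
lie in `[0, 2κ]`. The total error is thus at most `d ≤ ξ`. -/

open Function

theorem distInt_add_intCast (x : ℝ) (n : ℤ) : distInt (x + n) = distInt x := by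
  simp only [distInt, round_add_intCast, Int.cast_add, add_sub_add_right_eq_sub]

theorem distInt_natCast_mul_fract (n : ℕ) (x : ℝ) :
    distInt (n * Int.fract x) = distInt (n * x) := by
  rw [← distInt_add_intCast _ (n * ⌊x⌋), ← Int.self_sub_floor]
  push_cast
  ring_nf

theorem distInt_le_iff_fract_add_le {x κ : ℝ} (hκ : κ < 1 / 2) :
    distInt x ≤ κ ↔ Int.fract (x + κ) ≤ 2 * κ := by
  constructor
  · intro h
    obtain ⟨h₁, h₂⟩ := abs_le.mp h
    have hfloor : ⌊x + κ⌋ = round x := Int.floor_eq_iff.mpr ⟨by linarith, by linarith⟩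
    rw [← Int.self_sub_floor, hfloor]
    linarith
  · intro h
    rw [← Int.self_sub_floor] at h
    have hfloor := Int.floor_le (x + κ)
    have hclose : |x - ⌊x + κ⌋| ≤ κ := abs_le.mpr ⟨by linarith, by linarith⟩
    exact (round_le x ⌊x + κ⌋).trans hclose

theorem fract_natCast_add_div {Q : ℕ} (hQ : 0 < Q) (n : ℕ) {δ : ℝ} (hδ₀ : 0 ≤ δ) (hδ₁ : δ < 1) :
    Int.fract ((n + δ) / Q) = ((n % Q : ℕ) + δ) / Q := by
  have hQ' : (0 : ℝ) < Q := by exact_mod_cast hQ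
  have hmod : ((n % Q : ℕ) : ℝ) + 1 ≤ Q := by exact_mod_cast Nat.mod_lt n hQ
  refine Int.fract_eq_iff.mpr ⟨by positivity, (div_lt_one hQ').mpr (by linarith), (n / Q : ℕ), ?_⟩
  have hn : (n : ℝ) = (n % Q : ℕ) + Q * (n / Q : ℕ) := by exact_mod_cast (Nat.mod_add_div n Q).symm
  rw [Int.cast_natCast, hn]
  field_simp
  ring

theorem card_filter_range_mul_add_mod {a Q : ℕ} (hQ : 0 < Q) (ha : a.Coprime Q) (b : ℕ)
    (p : ℕ → Prop) [DecidablePred p] :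
    #{r ∈ range Q | p ((a * r + b) % Q)} = #{s ∈ range Q | p s} := by
  have hmaps : Set.MapsTo (fun r => (a * r + b) % Q) (range Q) (range Q) :=
    fun r _ => mem_range.mpr (Nat.mod_lt _ hQ)
  have hinj : Set.InjOn (fun r => (a * r + b) % Q) (range Q) := by
    intro r₁ h₁ r₂ h₂ h
    have : a * r₁ ≡ a * r₂ [MOD Q] := Nat.ModEq.add_right_cancel' b h
    exact (Nat.ModEq.cancel_left_of_coprime (Nat.coprime_comm.mp ha) this).eq_of_lt_of_lt
      (mem_range.mp h₁) (mem_range.mp h₂)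
  have himage : (range Q).image (fun r => (a * r + b) % Q) = range Q :=
    eq_of_subset_of_card_le hmaps.finsetImage_subset (card_image_of_injOn hinj).ge
  calc #{r ∈ range Q | p ((a * r + b) % Q)}
      = #(((range Q).filter fun r => p ((a * r + b) % Q)).image fun r => (a * r + b) % Q) :=
        (card_image_of_injOn (hinj.mono (filter_subset _ _))).symm
    _ = #{s ∈ range Q | p s} := by rw [← filter_image, himage]

theorem abs_card_filter_range_add_le_sub_le_one {Q : ℕ} {δ y : ℝ} (hδ₀ : 0 ≤ δ) (hδ₁ : δ < 1)
    (hy₀ : 0 ≤ y) (hyQ : y ≤ Q) :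
    |(#{s ∈ range Q | ((s : ℕ) : ℝ) + δ ≤ y} : ℝ) - y| ≤ 1 := by
  have hlower : ⌈y - δ⌉₊ ≤ #{s ∈ range Q | ((s : ℕ) : ℝ) + δ ≤ y} := by
    rw [← card_range ⌈y - δ⌉₊]
    refine card_le_card fun s hs => ?_
    have hs' : (s : ℝ) < y - δ := Nat.lt_ceil.mp (mem_range.mp hs)
    have hsQ : (s : ℝ) < Q := by linarith
    exact mem_filter.mpr ⟨mem_range.mpr (by exact_mod_cast hsQ), by linarith⟩
  have hupper : #{s ∈ range Q | ((s : ℕ) : ℝ) + δ ≤ y} ≤ ⌊y⌋₊ + 1 := by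
    rw [← card_range (⌊y⌋₊ + 1)]
    refine card_le_card fun s hs => ?_
    have hs' : (s : ℝ) ≤ y := by linarith [(mem_filter.mp hs).2]
    exact mem_range.mpr (Nat.lt_succ_of_le (Nat.le_floor hs'))
  have hceil : y - δ ≤ ⌈y - δ⌉₊ := Nat.le_ceil _
  have hfloor : (⌊y⌋₊ : ℝ) ≤ y := Nat.floor_le hy₀
  have hlower' : (⌈y - δ⌉₊ : ℝ) ≤ #{s ∈ range Q | ((s : ℕ) : ℝ) + δ ≤ y} := by exact_mod_cast hlower
  have hupper' : (#{s ∈ range Q | ((s : ℕ) : ℝ) + δ ≤ y} : ℝ) ≤ ⌊y⌋₊ + 1 := by exact_mod_cast hupper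
  rw [abs_le]
  constructor <;> linarith

theorem Nat.count_mul_of_periodic {p : ℕ → Prop} [DecidablePred p] {Q : ℕ} (hp : Periodic p Q)
    (d : ℕ) : Nat.count p (d * Q) = d * Nat.count p Q := by
  induction d with
  | zero => simp
  | succ d ih =>
    have hshift : (fun k => p (d * Q + k)) = p := funext fun k => by
      rw [add_comm]; exact (hp.nat_mul d) k
    rw [succ_mul, Nat.count_add]
    simp only [hshift, ih, succ_mul]

noncomputable def progressionHits (ξ q : ℕ) (γ c : ℝ) : ℕ :=
  Nat.count (fun j => Int.fract (ξ * j / q + γ) ≤ c) q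

theorem progressionHits_mul_mul {d : ℕ} (hd : 0 < d) (a Q : ℕ) (γ c : ℝ) :
    progressionHits (d * a) (d * Q) γ c = d * progressionHits a Q γ c := by
  have hd' : (d : ℝ) ≠ 0 := by exact_mod_cast hd.ne'
  have hcancel : (fun j : ℕ => Int.fract (((d * a : ℕ) : ℝ) * j / (d * Q : ℕ) + γ) ≤ c)
      = fun j : ℕ => Int.fract ((a : ℝ) * j / Q + γ) ≤ c := by
    funext j
    push_cast
    rw [mul_assoc, mul_div_mul_left _ _ hd']
  have hperiodic : Periodic (fun j : ℕ => Int.fract ((a : ℝ) * j / Q + γ) ≤ c) Q := by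
    intro j
    obtain rfl | hQ := Q.eq_zero_or_pos
    · rfl
    have hQ' : (Q : ℝ) ≠ 0 := by exact_mod_cast hQ.ne'
    have hshift : (a : ℝ) * (j + Q : ℕ) / Q + γ = a * j / Q + γ + a := by
      push_cast
      field_simp
      ring
    simp only [hshift, Int.fract_add_natCast]
  simp only [progressionHits, hcancel]
  exact Nat.count_mul_of_periodic hperiodic d

theorem abs_progressionHits_sub_le_one {a Q : ℕ} (hQ : 0 < Q) (ha : a.Coprime Q) (γ : ℝ) {c : ℝ}
    (hc₀ : 0 ≤ c) (hc₁ : c ≤ 1) : |(progressionHits a Q γ c : ℝ) - c * Q| ≤ 1 := by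
  have hQ' : (0 : ℝ) < Q := by exact_mod_cast hQ
  set b := ⌊Q * Int.fract γ⌋₊
  set δ := Q * Int.fract γ - b
  have hδ₀ : 0 ≤ δ := sub_nonneg.mpr (Nat.floor_le (by positivity))
  have hδ₁ : δ < 1 := by linarith [Nat.lt_floor_add_one (Q * Int.fract γ)]
  have hfract : ∀ r : ℕ, Int.fract (a * r / Q + γ) = ((((a * r + b) % Q : ℕ) : ℝ) + δ) / Q := by
    intro r
    have hsplit : (a : ℝ) * r / Q + γ = ((a * r + b : ℕ) + δ) / Q + ⌊γ⌋ := by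
      conv_lhs => rw [← Int.fract_add_floor γ]
      simp only [δ]
      push_cast
      field_simp
      ring
    rw [hsplit, Int.fract_add_intCast, fract_natCast_add_div hQ _ hδ₀ hδ₁]
  have hscale : ∀ s : ℕ, ((s : ℝ) + δ) / Q ≤ c ↔ (s : ℝ) + δ ≤ c * Q := fun s => div_le_iff₀ hQ'
  rw [progressionHits, Nat.count_eq_card_filter_range]
  simp only [hfract, hscale]
  rw [card_filter_range_mul_add_mod hQ ha b (fun s => (s : ℝ) + δ ≤ c * Q)]
  exact abs_card_filter_range_add_le_sub_le_one hδ₀ hδ₁ (by positivity) (by nlinarith)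

theorem abs_progressionHits_sub_le_gcd {ξ q : ℕ} (hq : 0 < q) (γ : ℝ) {c : ℝ} (hc₀ : 0 ≤ c)
    (hc₁ : c ≤ 1) : |(progressionHits ξ q γ c : ℝ) - c * q| ≤ ξ.gcd q := by
  obtain ⟨a, Q, hco, hξ, hq'⟩ := Nat.exists_coprime ξ q
  set d := ξ.gcd q
  have hd : 0 < d := Nat.gcd_pos_of_pos_right ξ hq
  have hQ : 0 < Q := Nat.pos_of_mul_pos_right (hq'.symm ▸ hq)
  rw [hξ, hq', mul_comm a d, mul_comm Q d, progressionHits_mul_mul hd]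
  calc |((d * progressionHits a Q γ c : ℕ) : ℝ) - c * (d * Q : ℕ)|
      = d * |(progressionHits a Q γ c : ℝ) - c * Q| := by
        push_cast
        rw [← mul_assoc, mul_comm c, mul_assoc, ← mul_sub, abs_mul, Nat.abs_cast]
    _ ≤ d * 1 := by gcongr; exact abs_progressionHits_sub_le_one hQ hco γ hc₀ hc₁
    _ = d := mul_one _

theorem injOn_fract_natCast_div_add (q : ℕ) (β : ℝ) :
    Set.InjOn (fun j : ℕ => Int.fract ((j : ℝ) / q + β)) (range q) := by
  intro j₁ h₁ j₂ h₂ h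
  have h₁ : j₁ < q := mem_range.mp h₁
  have h₂ : j₂ < q := mem_range.mp h₂
  obtain ⟨z, hz⟩ := Int.fract_eq_fract.mp h
  have hq : (q : ℝ) ≠ 0 := by exact_mod_cast (j₁.zero_le.trans_lt h₁).ne'
  have hdiff : (j₁ : ℤ) - j₂ = z * q := by
    have : (j₁ : ℝ) - j₂ = z * q := by
      field_simp at hz
      linarith
    exact_mod_cast this
  have hzero : (j₁ : ℤ) - j₂ = 0 :=
    Int.eq_zero_of_abs_lt_dvd ⟨z, by rw [hdiff, mul_comm]⟩ (abs_sub_lt_iff.mpr ⟨by omega, by omega⟩)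
  omega

-- The ascription `(j : ℝ)` in `meshT` makes it map over `range q` coerced to `Finset ℝ`.
theorem meshT_eq_image_range (q : ℕ) (θ : ℝ) :
    meshT q θ = (range q).image fun j : ℕ => Int.fract ((j : ℝ) / q + θ / q ^ 2) := by
  ext t
  simp [meshT]

theorem card_filter_meshT_distInt_le {q : ℕ} (ξ : ℕ) (θ : ℝ) {κ : ℝ} (hκ : κ < 1 / 2) :
    #{t ∈ meshT q θ | distInt (ξ * t) ≤ κ} = progressionHits ξ q (ξ * θ / q ^ 2 + κ) (2 * κ) := by
  rw [meshT_eq_image_range, filter_image,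
    card_image_of_injOn ((injOn_fract_natCast_div_add q _).mono (filter_subset _ _)),
    progressionHits, Nat.count_eq_card_filter_range]
  congr 1
  refine filter_congr fun j _ => ?_
  rw [distInt_natCast_mul_fract, distInt_le_iff_fract_add_le hκ, mul_add, add_assoc, mul_div_assoc,
    mul_div_assoc]

/-- the number of mesh points of `T_{q,θ}` in the Bohr set
`B_ξ(κ) = {t ∈ [0,1) : ‖ξt‖ ≤ κ}` is `2κq + O(ξ)`. -/
theorem mesh_bohr_count :
    ∃ C : ℝ, 0 < C ∧
      ∀ (q ξ : ℕ) (θ κ : ℝ),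
        1 ≤ q → 1 ≤ ξ → 0 < κ → κ < 1 / 2 →
        |(((meshT q θ).filter (fun t => distInt ((ξ : ℝ) * t) ≤ κ)).card : ℝ)
            - 2 * κ * q| ≤ C * ξ := by
  refine ⟨1, one_pos, fun q ξ θ κ hq hξ _ hκ => ?_⟩
  rw [card_filter_meshT_distInt_le ξ θ hκ, one_mul]
  calc _ ≤ (ξ.gcd q : ℝ) := abs_progressionHits_sub_le_gcd hq _ (by linarith) (by linarith)
    _ ≤ ξ := by exact_mod_cast Nat.gcd_le_left q hξ
end
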